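/- The Shannon entropy of the temperature-softmax distribution P_γ(t) = exp(S^t/γ)/Σ_k exp(S^k/γ) is nondecreasing in γ > 0. In particular, a lower temperature γ produces a task-id prediction distribution with lower (or equal) entropy. -/

import Mathlib

/-!
Write `β = 1/γ` for the inverse temperature, `Z(β) = ∑ₖ exp (β Sᵏ)` and `E(β) = ∑ₜ P_β(t) Sᵗ`.
Then `−∑ₜ p(t) log P_β(t) = log Z(β) − β ∑ₜ p(t) Sᵗ` for every
probability vector `p`, so `H(β) = log Z(β) − β E(β)`, and Gibbs' inequality says that
`β' ↦ log Z(β') − β' E(β)` is minimised at `β' = β`. Adding the two Gibbs inequalities for `β₁, β₂`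
shows that `E` is monotone, and for `0 ≤ β₂ ≤ β₁`
`H(β₂) = log Z(β₂) − β₂ E(β₂) ≥ log Z(β₂) − β₂ E(β₁) ≥ log Z(β₁) − β₁ E(β₁) = H(β₁)`.
-/

open Finset Real

theorem sum_mul_log_le_sum_mul_log {ι : Type*} [Fintype ι] {p q : ι → ℝ}
    (hp : ∀ i, 0 < p i) (hq : ∀ i, 0 < q i) (hpq : ∑ i, q i ≤ ∑ i, p i) :
    ∑ i, p i * log (q i) ≤ ∑ i, p i * log (p i) := by
  have pointwise : ∀ i, p i * log (q i) - p i * log (p i) ≤ q i - p i := fun i => by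
    have hlog := log_le_sub_one_of_pos (div_pos (hq i) (hp i))
    rw [log_div (hq i).ne' (hp i).ne'] at hlog
    calc p i * log (q i) - p i * log (p i) = p i * (log (q i) - log (p i)) := by ring
      _ ≤ p i * (q i / p i - 1) := mul_le_mul_of_nonneg_left hlog (hp i).le
      _ = q i - p i := by rw [mul_sub, mul_div_cancel₀ _ (hp i).ne', mul_one]
  have hsum := sum_le_sum fun i (_ : i ∈ univ) => pointwise i
  rw [sum_sub_distrib, sum_sub_distrib] at hsum
  linarith

namespace Gibbs

variable {ι : Type*} [Fintype ι]

noncomputable def partitionFn (S : ι → ℝ) (β : ℝ) : ℝ := ∑ j, exp (β * S j)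

noncomputable def distrib (S : ι → ℝ) (β : ℝ) (i : ι) : ℝ := exp (β * S i) / partitionFn S β

noncomputable def meanScore (S : ι → ℝ) (β : ℝ) : ℝ := ∑ i, distrib S β i * S i

variable [Nonempty ι] (S : ι → ℝ) (β : ℝ)

theorem partitionFn_pos : 0 < partitionFn S β :=
  sum_pos (fun _ _ => exp_pos _) univ_nonempty

theorem distrib_pos (i : ι) : 0 < distrib S β i :=
  div_pos (exp_pos _) (partitionFn_pos S β)

theorem sum_distrib : ∑ i, distrib S β i = 1 := by
  simp only [distrib, ← sum_div]
  exact div_self (partitionFn_pos S β).ne'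

theorem log_distrib (i : ι) : log (distrib S β i) = β * S i - log (partitionFn S β) := by
  rw [distrib, log_div (exp_pos _).ne' (partitionFn_pos S β).ne', log_exp]

theorem sum_mul_log_distrib {p : ι → ℝ} (hp : ∑ i, p i = 1) :
    ∑ i, p i * log (distrib S β i) = β * ∑ i, p i * S i - log (partitionFn S β) := by
  simp only [log_distrib, mul_sub, sum_sub_distrib, ← sum_mul, hp, mul_left_comm _ β, mul_sum,
    one_mul]

theorem sum_distrib_mul_log_distrib :
    ∑ i, distrib S β i * log (distrib S β i) = β * meanScore S β - log (partitionFn S β) :=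
  sum_mul_log_distrib S β (sum_distrib S β)

theorem mul_meanScore_sub_log_partitionFn_le (β' : ℝ) :
    β' * meanScore S β - log (partitionFn S β') ≤ β * meanScore S β - log (partitionFn S β) := by
  have gibbs := sum_mul_log_le_sum_mul_log (distrib_pos S β) (distrib_pos S β')
    (by rw [sum_distrib, sum_distrib])
  rwa [sum_mul_log_distrib S β' (sum_distrib S β), sum_distrib_mul_log_distrib] at gibbs

theorem meanScore_monotone : Monotone (meanScore S) := by
  intro β₁ β₂ h
  obtain rfl | hlt := h.eq_or_lt
  · rfl
  have h₁ := mul_meanScore_sub_log_partitionFn_le S β₁ β₂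
  have h₂ := mul_meanScore_sub_log_partitionFn_le S β₂ β₁
  nlinarith

theorem entropy_antitoneOn :
    AntitoneOn (fun β => -∑ i, distrib S β i * log (distrib S β i)) (Set.Ici 0) := by
  intro β₂ (hβ₂ : 0 ≤ β₂) β₁ _ h
  simp only [sum_distrib_mul_log_distrib, neg_le_neg_iff]
  calc β₂ * meanScore S β₂ - log (partitionFn S β₂)
      ≤ β₂ * meanScore S β₁ - log (partitionFn S β₂) := by
        gcongr
        exact meanScore_monotone S h
    _ ≤ β₁ * meanScore S β₁ - log (partitionFn S β₁) :=
        mul_meanScore_sub_log_partitionFn_le S β₁ β₂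

end Gibbs

/-- The Shannon entropy `H(γ) = −∑ P_γ(t) log P_γ(t)` of the temperature-softmax
distribution `P_γ(t) = exp(S^t/γ)/∑_k exp(S^k/γ)` is nondecreasing in `γ > 0`:
a lower temperature yields lower (or equal) entropy. -/
theorem softmax_entropy_monotone_in_temperature (T : ℕ) (hT : 0 < T) (S : Fin T → ℝ)
    (P : ℝ → Fin T → ℝ)
    (hP : ∀ g t, P g t = Real.exp (S t / g) / ∑ k, Real.exp (S k / g))
    (H : ℝ → ℝ) (hH : ∀ g, H g = -∑ t, P g t * Real.log (P g t)) :
    ∀ g1 g2 : ℝ, 0 < g1 → g1 ≤ g2 → H g1 ≤ H g2 := by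
  intro g1 g2 hg1 hg12
  have : Nonempty (Fin T) := ⟨⟨0, hT⟩⟩
  have hP_distrib : ∀ g, P g = Gibbs.distrib S g⁻¹ := fun g => by
    ext t
    simp only [hP, Gibbs.distrib, Gibbs.partitionFn, div_eq_inv_mul]
  rw [hH, hH, hP_distrib, hP_distrib]
  exact Gibbs.entropy_antitoneOn S (inv_nonneg.2 (hg1.trans_le hg12).le)
    (inv_nonneg.2 hg1.le) (inv_anti₀ hg1 hg12)
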